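/- arXiv:1807.00540 — 4 statements merged into one kernel-verified Lean document; each statement's English description precedes it below -/
import Mathlib

section
/- Let 0 < q₁, q₂ ≤ ∞ and s₁, s₂ ∈ ℝ. The embedding l^{q₁}_{s₁}(ℤⁿ) ⊆ l^{q₂}_{s₂}(ℤⁿ) (i.e., there is a constant C such that ‖a‖_{l^{q₂}_{s₂}} ≤ C‖a‖_{l^{q₁}_{s₁}} for all sequences a : ℤⁿ → ℂ) holds if and only if either (1/q₂ ≤ 1/q₁ and s₂ ≤ s₁), or (1/q₂ > 1/q₁ and 1/q₂ + s₂/n < 1/q₁ + s₁/n). -/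
/-!
Put `u = ⟨k⟩^{s₁} a`: the embedding says that multiplication by `m = ⟨k⟩^{s₂ - s₁}` is bounded
from `ℓ^{q₁}(ℤⁿ)` to `ℓ^{q₂}(ℤⁿ)`. When `q₁ ≤ q₂` this happens iff `m` is bounded (test on Dirac
masses; conversely `ℓ^{q₁} ⊆ ℓ^{q₂}` contractively), i.e. iff `s₂ ≤ s₁`. When `q₂ < q₁` it happens
iff `m ∈ ℓ^t` with `1/t = 1/q₂ - 1/q₁` (Hölder; conversely test on `𝟙_F |m|^{t/q₁}` for finite
`F`), and `∑ ⟨k⟩^{-σ}` converges iff `σ > n`: a product of one-dimensional sums bounds it when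
`σ > n`, while for `σ = n` the slab `{k₀ = m, 0 ≤ kᵢ < m}` alone contributes `≍ 1/m`.
-/

open scoped ENNReal NNReal

/-- The Japanese bracket `⟨k⟩ = (1+|k|²)^{1/2}` for `k ∈ ℤⁿ`. -/
noncomputable def jpw {n : ℕ} (k : Fin n → ℤ) : ℝ :=
  (1 + ∑ i, ((k i : ℝ)) ^ 2) ^ ((1 : ℝ) / 2)

/-- The weighted sequence norm `‖a‖_{l^q_s} = (∑_k |a k|^q ⟨k⟩^{sq})^{1/q}`,
with the supremum modification when `q = ∞`. -/
noncomputable def lqsNorm {n : ℕ} (q : ℝ≥0∞) (s : ℝ) (a : (Fin n → ℤ) → ℂ) : ℝ≥0∞ :=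
  if q = ∞ then ⨆ k, (‖a k‖₊ : ℝ≥0∞) * ENNReal.ofReal (jpw k ^ s)
  else (∑' k, ((‖a k‖₊ : ℝ≥0∞) * ENNReal.ofReal (jpw k ^ s)) ^ q.toReal) ^ (1 / q.toReal)

/-- `1/q` interpreted as a real number, with `1/∞ = 0`. -/
noncomputable def rcp (q : ℝ≥0∞) : ℝ := (q⁻¹).toReal

open Finset MeasureTheory MeasureTheory.Measure

lemma ENNReal.tsum_rpow_le_rpow_tsum {ι : Type*} (f : ι → ℝ≥0∞) {r : ℝ} (hr : 1 ≤ r) :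
    ∑' i, f i ^ r ≤ (∑' i, f i) ^ r := by
  have hsplit : ∀ x : ℝ≥0∞, x ^ r = x * x ^ (r - 1) := fun x => by
    nth_rw 2 [← ENNReal.rpow_one x]
    rw [← ENNReal.rpow_add_of_nonneg _ _ zero_le_one (sub_nonneg.2 hr), add_sub_cancel]
  calc ∑' i, f i ^ r = ∑' i, f i * f i ^ (r - 1) := by simp_rw [hsplit]
    _ ≤ ∑' i, f i * (∑' j, f j) ^ (r - 1) := by
        gcongr with i
        exact ENNReal.le_tsum i
    _ = (∑' i, f i) ^ r := by rw [ENNReal.tsum_mul_right, hsplit]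

lemma ENNReal.le_rpow_inv_of_rpow_add_le_mul_rpow {T C : ℝ≥0∞} {x y : ℝ} (hT : T ≠ ∞)
    (hx : 0 < x) (h : T ^ (x + y) ≤ C * T ^ y) : T ≤ C ^ x⁻¹ := by
  have hTx : T ^ x ≤ C := by
    rcases eq_or_ne T 0 with rfl | h0
    · rw [ENNReal.zero_rpow_of_pos hx]
      exact zero_le
    rw [ENNReal.rpow_add _ _ h0 hT] at h
    exact (ENNReal.mul_le_mul_iff_left (ENNReal.rpow_pos (pos_iff_ne_zero.2 h0) hT).ne'
      (ENNReal.rpow_ne_top_of_nonneg' (pos_iff_ne_zero.2 h0) hT)).1 h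
  calc T = (T ^ x) ^ x⁻¹ := by rw [← ENNReal.rpow_mul, mul_inv_cancel₀ hx.ne', ENNReal.rpow_one]
    _ ≤ C ^ x⁻¹ := ENNReal.rpow_le_rpow hTx (inv_pos.2 hx).le

lemma summable_pi_prod_of_nonneg {ι β : Type*} [Fintype ι] {g : β → ℝ} (hg₀ : 0 ≤ g)
    (hg : Summable g) : Summable fun x : ι → β => ∏ i, g (x i) := by
  classical
  refine summable_of_sum_le (c := (∑' b, g b) ^ Fintype.card ι)
    (fun x => prod_nonneg fun i _ => hg₀ _) fun u => ?_
  set S := u.biUnion fun x => univ.image x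
  have hu : u ⊆ Fintype.piFinset fun _ => S := fun x hx =>
    Fintype.mem_piFinset.2 fun i => mem_biUnion.2 ⟨x, hx, mem_image_of_mem x (mem_univ i)⟩
  calc ∑ x ∈ u, ∏ i, g (x i) ≤ ∑ x ∈ Fintype.piFinset fun _ => S, ∏ i, g (x i) :=
        sum_le_sum_of_subset_of_nonneg hu fun x _ _ => prod_nonneg fun i _ => hg₀ _
    _ = ∏ _i : ι, ∑ b ∈ S, g b := (prod_univ_sum _ _).symm
    _ ≤ ∏ _i : ι, ∑' b, g b :=
        prod_le_prod (fun _ _ => sum_nonneg fun b _ => hg₀ b)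
          fun _ _ => hg.sum_le_tsum S fun b _ => hg₀ b
    _ = (∑' b, g b) ^ Fintype.card ι := by rw [prod_const, card_univ]

namespace MeasureTheory

section Count

variable {α : Type*} [MeasurableSpace α] [MeasurableSingletonClass α] {p q : ℝ≥0∞}

lemma eLpNorm_count_le_of_exponent_le {ε : Type*} [TopologicalSpace ε] [ContinuousENorm ε]
    (f : α → ε) (hp : p ≠ 0) (hpq : p ≤ q) : eLpNorm f q count ≤ eLpNorm f p count := by
  rcases eq_or_ne q ∞ with rfl | hq
  · rw [eLpNorm_exponent_top, eLpNormEssSup_count]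
    exact iSup_le fun i => enorm_le_eLpNorm_count f i hp
  have hp' : p ≠ ∞ := ne_top_of_le_ne_top hq hpq
  have hp₀ : 0 < p.toReal := ENNReal.toReal_pos hp hp'
  have hpq' : p.toReal ≤ q.toReal := ENNReal.toReal_mono hq hpq
  have hq₀ : 0 < q.toReal := hp₀.trans_le hpq'
  rw [eLpNorm_eq_lintegral_rpow_enorm_toReal hp hp',
    eLpNorm_eq_lintegral_rpow_enorm_toReal (ne_bot_of_le_ne_bot hp hpq) hq,
    lintegral_count, lintegral_count]
  calc (∑' i, ‖f i‖ₑ ^ q.toReal) ^ (1 / q.toReal)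
      = (∑' i, (‖f i‖ₑ ^ p.toReal) ^ (q.toReal / p.toReal)) ^ (1 / q.toReal) := by
        simp_rw [← ENNReal.rpow_mul, mul_div_cancel₀ _ hp₀.ne']
    _ ≤ ((∑' i, ‖f i‖ₑ ^ p.toReal) ^ (q.toReal / p.toReal)) ^ (1 / q.toReal) := by
        gcongr
        exact ENNReal.tsum_rpow_le_rpow_tsum _ ((one_le_div hp₀).2 hpq')
    _ = (∑' i, ‖f i‖ₑ ^ p.toReal) ^ (1 / p.toReal) := by
        rw [← ENNReal.rpow_mul]
        congr 1
        field_simp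

lemma eLpNorm_count_single {E : Type*} [NormedAddCommGroup E] [DecidableEq α]
    (i : α) (x : E) (hp : p ≠ 0) : eLpNorm (Pi.single i x) p count = ‖x‖ₑ := by
  rw [← eLpNorm_restrict_eq_of_support_subset Pi.support_single_subset]
  simp [eLpNorm_dirac _ _ hp]

lemma eLpNorm_count_indicator_rpow {F : Finset α} (hF : F.Nonempty) {g : α → ℝ}
    (hg : ∀ i, 0 ≤ g i) (hp : p ≠ 0) :
    eLpNorm ((F : Set α).indicator fun i => g i ^ p⁻¹.toReal) p count =
      (∑ i ∈ F, ENNReal.ofReal (g i)) ^ p⁻¹.toReal := by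
  rcases eq_or_ne p ∞ with rfl | hp'
  · obtain ⟨i₀, hi₀⟩ := hF
    simp only [ENNReal.inv_top, ENNReal.toReal_zero, Real.rpow_zero, ENNReal.rpow_zero,
      eLpNorm_exponent_top, eLpNormEssSup_count, enorm_indicator_eq_indicator_enorm, enorm_one]
    refine le_antisymm (iSup_le fun i => by by_cases hi : i ∈ F <;> simp [hi]) ?_
    exact le_iSup_of_le i₀ (by simp [hi₀])
  have hp₀ : 0 < p.toReal := ENNReal.toReal_pos hp hp'
  rw [eLpNorm_eq_lintegral_rpow_enorm_toReal hp hp', lintegral_count, ENNReal.toReal_inv,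
    ← one_div, tsum_eq_sum (s := F) fun i hi => by simp [hi, hp₀]]
  congr 1
  refine Finset.sum_congr rfl fun i hi => ?_
  rw [Set.indicator_of_mem (Finset.mem_coe.2 hi), Real.enorm_of_nonneg (Real.rpow_nonneg (hg i) _),
    ENNReal.ofReal_rpow_of_nonneg (Real.rpow_nonneg (hg i) _) hp₀.le, ← Real.rpow_mul (hg i),
    one_div_mul_cancel hp₀.ne', Real.rpow_one]

end Count

end MeasureTheory

section Multiplier

variable {α : Type*} [MeasurableSpace α] [MeasurableSingletonClass α]
  {E : Type*} [NormedAddCommGroup E] [NormedSpace ℝ E] {p q : ℝ≥0∞} {m : α → ℝ}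

variable (E) in
def IsBoundedMultiplier (p q : ℝ≥0∞) (m : α → ℝ) : Prop :=
  ∃ C : ℝ≥0, ∀ u : α → E, eLpNorm (m • u) q count ≤ C * eLpNorm u p count

lemma isBoundedMultiplier_iff_bddAbove [Countable α] [Nontrivial E] (hp : p ≠ 0) (hpq : p ≤ q) :
    IsBoundedMultiplier E p q m ↔ BddAbove (Set.range fun i => |m i|) := by
  classical
  constructor
  · rintro ⟨C, hC⟩
    obtain ⟨e, he⟩ := exists_norm_eq E zero_le_one
    have he' : ‖e‖ₑ = 1 := by rw [← ofReal_norm, he, ENNReal.ofReal_one]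
    refine ⟨C, Set.forall_mem_range.2 fun i => ?_⟩
    have hsingle : m • Pi.single i e = Pi.single (M := fun _ => E) i (m i • e) := by
      ext j
      rcases eq_or_ne j i with rfl | hj <;> simp [*]
    have hCi := hC (Pi.single i e)
    rw [hsingle, eLpNorm_count_single _ _ (ne_bot_of_le_ne_bot hp hpq),
      eLpNorm_count_single _ _ hp, enorm_smul, he', mul_one, mul_one,
      Real.enorm_eq_ofReal_abs, ← ENNReal.ofReal_coe_nnreal] at hCi
    exact (ENNReal.ofReal_le_ofReal_iff C.coe_nonneg).1 hCi
  · rintro ⟨C, hC⟩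
    refine ⟨C.toNNReal, fun u => ?_⟩
    calc eLpNorm (m • u) q count ≤ eLpNorm m ∞ count * eLpNorm u q count :=
          eLpNorm_smul_le_eLpNorm_top_mul_eLpNorm q AEStronglyMeasurable.of_discrete m
      _ ≤ C.toNNReal * eLpNorm u p count := by
          gcongr
          · rw [eLpNorm_exponent_top, eLpNormEssSup_count]
            refine iSup_le fun i => ?_
            rw [Real.enorm_eq_ofReal_abs, ENNReal.ofNNReal_toNNReal]
            exact ENNReal.ofReal_le_ofReal (hC (Set.mem_range_self i))
          · exact eLpNorm_count_le_of_exponent_le u hp hpq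

lemma sum_abs_rpow_le_of_eLpNorm_smul_le [Nontrivial E] {C : ℝ≥0} (hq : q ≠ 0) (hqp : q < p)
    (hC : ∀ u : α → E, eLpNorm (m • u) q count ≤ C * eLpNorm u p count) (F : Finset α) :
    ∑ i ∈ F, |m i| ^ (q⁻¹.toReal - p⁻¹.toReal)⁻¹ ≤ (C : ℝ) ^ (q⁻¹.toReal - p⁻¹.toReal)⁻¹ := by
  set a := p⁻¹.toReal
  set b := q⁻¹.toReal
  set τ := (b - a)⁻¹
  have hab : 0 < b - a := sub_pos.2 <|
    ENNReal.toReal_strict_mono (ENNReal.inv_ne_top.2 hq) (ENNReal.inv_lt_inv.2 hqp)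
  have hτ : 0 < τ := inv_pos.2 hab
  rcases F.eq_empty_or_nonempty with rfl | hF
  · simpa using Real.rpow_nonneg C.coe_nonneg τ
  set g := fun i => |m i| ^ τ
  have hg : ∀ i, 0 ≤ g i := fun i => Real.rpow_nonneg (abs_nonneg _) τ
  set T := ∑ i ∈ F, ENNReal.ofReal (g i)
  obtain ⟨e, he⟩ := exists_norm_eq E zero_le_one
  set u : α → E := fun i => (F : Set α).indicator (fun i => g i ^ a) i • e
  have hu : eLpNorm u p count = T ^ a := by
    rw [← eLpNorm_count_indicator_rpow hF hg (ne_bot_of_le_ne_bot hq hqp.le)]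
    exact eLpNorm_congr_norm_ae (.of_forall fun i => by rw [norm_smul, he, mul_one])
  -- the `ℓ^q` norm of `m • u` is `T ^ b` because `τ b = τ a + 1`
  have hmu : eLpNorm (m • u) q count = T ^ b := by
    rw [← eLpNorm_count_indicator_rpow hF hg hq]
    refine eLpNorm_congr_norm_ae (.of_forall fun i => ?_)
    show ‖m i • u i‖ = _
    by_cases hi : i ∈ F
    · have hτab : τ * (b - a) = 1 := inv_mul_cancel₀ hab.ne'
      have hexp : τ * b = τ * a + 1 := by linear_combination hτab
      simp only [u, g, norm_smul, he, mul_one, Real.norm_eq_abs,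
        Set.indicator_of_mem (Finset.mem_coe.2 hi)]
      rw [abs_of_nonneg (Real.rpow_nonneg (hg i) a), abs_of_nonneg (Real.rpow_nonneg (hg i) b),
        ← Real.rpow_mul (abs_nonneg _), ← Real.rpow_mul (abs_nonneg _), hexp,
        Real.rpow_add' (abs_nonneg _) (by positivity), Real.rpow_one, mul_comm]
    · simp [u, hi]
  have hTτ : T ≤ (C : ℝ≥0∞) ^ τ :=
    ENNReal.le_rpow_inv_of_rpow_add_le_mul_rpow
      (ENNReal.sum_ne_top.2 fun _ _ => ENNReal.ofReal_ne_top) hab (by rw [sub_add_cancel, ← hmu, ← hu]; exact hC u)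
  have hreal := ENNReal.toReal_mono (ENNReal.rpow_ne_top_of_nonneg hτ.le ENNReal.coe_ne_top) hTτ
  rwa [ENNReal.toReal_sum fun _ _ => ENNReal.ofReal_ne_top, ← ENNReal.toReal_rpow,
    ENNReal.coe_toReal, Finset.sum_congr rfl fun i _ => ENNReal.toReal_ofReal (hg i)] at hreal

lemma isBoundedMultiplier_iff_summable [Countable α] [Nontrivial E] (hq : q ≠ 0) (hqp : q < p) :
    IsBoundedMultiplier E p q m ↔ Summable fun i => |m i| ^ (q⁻¹.toReal - p⁻¹.toReal)⁻¹ := by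
  refine ⟨fun ⟨C, hC⟩ => summable_of_sum_le (fun i => Real.rpow_nonneg (abs_nonneg _) _)
    (sum_abs_rpow_le_of_eLpNorm_smul_le hq hqp hC), fun hm => ?_⟩
  set τ := (q⁻¹.toReal - p⁻¹.toReal)⁻¹
  have hτ : 0 < τ := inv_pos.2 <| sub_pos.2 <|
    ENNReal.toReal_strict_mono (ENNReal.inv_ne_top.2 hq) (ENNReal.inv_lt_inv.2 hqp)
  have hpq : p⁻¹ ≤ q⁻¹ := ENNReal.inv_le_inv.2 hqp.le
  set t : ℝ≥0∞ := (q⁻¹ - p⁻¹)⁻¹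
  have : ENNReal.HolderTriple t p q := ⟨by rw [inv_inv, tsub_add_cancel_of_le hpq]⟩
  have ht : t.toReal = τ := by
    rw [ENNReal.toReal_inv, ENNReal.toReal_sub_of_le hpq (ENNReal.inv_ne_top.2 hq)]
  have hmt : eLpNorm m t count ≠ ∞ := by
    obtain ⟨ht₀, ht₁⟩ := ENNReal.toReal_pos_iff.1 (ht ▸ hτ)
    rw [eLpNorm_eq_lintegral_rpow_enorm_toReal ht₀.ne' ht₁.ne, lintegral_count, ht]
    refine ENNReal.rpow_ne_top_of_nonneg (one_div_pos.2 hτ).le ?_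
    simp_rw [Real.enorm_eq_ofReal_abs, ENNReal.ofReal_rpow_of_nonneg (abs_nonneg _) hτ.le]
    rw [← ENNReal.ofReal_tsum_of_nonneg (fun _ => Real.rpow_nonneg (abs_nonneg _) _) hm]
    exact ENNReal.ofReal_ne_top
  refine ⟨(eLpNorm m t count).toNNReal, fun u => ?_⟩
  rw [ENNReal.coe_toNNReal hmt]
  exact eLpNorm_smul_le_mul_eLpNorm AEStronglyMeasurable.of_discrete
    AEStronglyMeasurable.of_discrete

end Multiplier

section JapaneseBracket

variable {n : ℕ}

lemma jpw_eq_sqrt (k : Fin n → ℤ) : jpw k = √(1 + ∑ i, ((k i : ℝ)) ^ 2) := by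
  rw [jpw, Real.sqrt_eq_rpow]

lemma one_le_jpw (k : Fin n → ℤ) : 1 ≤ jpw k := by
  rw [jpw_eq_sqrt, Real.one_le_sqrt]
  exact le_add_of_nonneg_right (by positivity)

lemma jpw_pos (k : Fin n → ℤ) : 0 < jpw k := one_pos.trans_le (one_le_jpw k)

lemma abs_le_jpw (k : Fin n → ℤ) (i : Fin n) : |(k i : ℝ)| ≤ jpw k := by
  rw [jpw_eq_sqrt, ← Real.sqrt_sq_eq_abs]
  refine Real.sqrt_le_sqrt ?_
  have := single_le_sum (f := fun j => ((k j : ℝ)) ^ 2) (fun j _ => sq_nonneg _) (mem_univ i)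
  linarith

lemma jpw_le_of_abs_le {k : Fin n → ℤ} {m : ℝ} (hm : 1 ≤ m) (hk : ∀ i, |(k i : ℝ)| ≤ m) :
    jpw k ≤ (n + 1) * m := by
  rw [jpw_eq_sqrt, ← Real.sqrt_sq (by positivity : (0 : ℝ) ≤ (n + 1) * m)]
  refine Real.sqrt_le_sqrt ?_
  have hsum : ∑ i, ((k i : ℝ)) ^ 2 ≤ n * m ^ 2 := by
    calc ∑ i, ((k i : ℝ)) ^ 2 ≤ ∑ _i : Fin n, m ^ 2 :=
          sum_le_sum fun i _ => by
            simpa only [sq_abs] using pow_le_pow_left₀ (abs_nonneg _) (hk i) 2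
      _ = n * m ^ 2 := by simp
  have hm2 : 1 ≤ m ^ 2 := one_le_pow₀ hm
  have hn0 : (0 : ℝ) ≤ n := n.cast_nonneg
  nlinarith [mul_nonneg hn0 (mul_nonneg hn0 (sq_nonneg m)), mul_nonneg hn0 (sq_nonneg m)]

lemma summable_jpw_rpow (hn : 0 < n) {r : ℝ} (hr : r < -n) :
    Summable fun k : Fin n → ℤ => jpw k ^ r := by
  have hn' : (0 : ℝ) < n := by exact_mod_cast hn
  set ρ := r / n
  have hρ : ρ < -1 := by rwa [div_lt_iff₀ hn', neg_one_mul]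
  have hg : Summable fun m : ℤ => (max 1 |(m : ℝ)|) ^ ρ := by
    refine (Real.summable_abs_int_rpow (b := -ρ) (by linarith)).of_norm_bounded_eventually ?_
    filter_upwards [(Set.finite_singleton (0 : ℤ)).compl_mem_cofinite] with m hm₀
    have hm : (1 : ℝ) ≤ |(m : ℝ)| := by
      rw [← Int.cast_abs]
      exact_mod_cast Int.one_le_abs hm₀
    rw [max_eq_right hm, neg_neg, Real.norm_of_nonneg (by positivity)]
  refine (summable_pi_prod_of_nonneg (fun m => by positivity) hg).of_nonneg_of_le
    (fun k => (Real.rpow_pos_of_pos (jpw_pos k) r).le) fun k => ?_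
  calc jpw k ^ r = ∏ _i : Fin n, jpw k ^ ρ := by
        rw [prod_const, card_univ, Fintype.card_fin, ← Real.rpow_mul_natCast (jpw_pos k).le,
          div_mul_cancel₀ r hn'.ne']
    _ ≤ ∏ i, (max 1 |(k i : ℝ)|) ^ ρ :=
        prod_le_prod (fun i _ => (Real.rpow_pos_of_pos (jpw_pos k) ρ).le) fun i _ =>
          Real.rpow_le_rpow_of_nonpos (by positivity)
            (max_le (one_le_jpw k) (abs_le_jpw k i)) (by linarith)

lemma le_sum_jpw_rpow_slab (N m : ℕ) :
    ((N : ℝ) + 2) ^ (-(N + 1 : ℝ)) * (1 / m) ≤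
      ∑ j ∈ Fintype.piFinset fun _ : Fin N => Ico (0 : ℤ) m,
        jpw (Fin.cons (m : ℤ) j : Fin (N + 1) → ℤ) ^ (-(N + 1 : ℝ)) := by
  rcases Nat.eq_zero_or_pos m with rfl | hm
  · simpa using sum_nonneg fun j _ => (Real.rpow_pos_of_pos (jpw_pos _) _).le
  have hm' : (1 : ℝ) ≤ m := by exact_mod_cast hm
  have hterm : ∀ j ∈ Fintype.piFinset fun _ : Fin N => Ico (0 : ℤ) m,
      ((N + 2) * m : ℝ) ^ (-(N + 1 : ℝ)) ≤
        jpw (Fin.cons (m : ℤ) j : Fin (N + 1) → ℤ) ^ (-(N + 1 : ℝ)) := by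
    intro j hj
    refine Real.rpow_le_rpow_of_nonpos (jpw_pos _) ?_ (by linarith)
    have hbound := jpw_le_of_abs_le hm' (k := Fin.cons (m : ℤ) j) fun i => by
      refine Fin.cases (by simp) (fun i => ?_) i
      have hji := mem_Ico.1 (Fintype.mem_piFinset.1 hj i)
      simp only [Fin.cons_succ]
      rw [abs_of_nonneg (by exact_mod_cast hji.1)]
      exact_mod_cast hji.2.le
    push_cast at hbound
    linarith
  have hpow : (m : ℝ) ^ (-(N + 1 : ℝ)) = ((m : ℝ) ^ N * m)⁻¹ := by
    rw [Real.rpow_neg (by positivity), ← pow_succ, ← Real.rpow_natCast]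
    push_cast
    rfl
  refine le_of_eq_of_le ?_ (card_nsmul_le_sum _ _ _ hterm)
  rw [Fintype.card_piFinset, prod_const, card_univ, Fintype.card_fin, Int.card_Ico, sub_zero,
    Int.toNat_natCast, nsmul_eq_mul, Real.mul_rpow (by positivity) (by positivity), hpow]
  push_cast
  field_simp

lemma not_summable_jpw_rpow_neg_succ (N : ℕ) :
    ¬ Summable fun k : Fin (N + 1) → ℤ => jpw k ^ (-(N + 1 : ℝ)) := by
  set f := fun k : Fin (N + 1) → ℤ => jpw k ^ (-(N + 1 : ℝ))
  intro hf
  have hf' : Summable fun p : ℤ × (Fin N → ℤ) => f (Fin.cons p.1 p.2) :=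
    (Fin.consEquiv fun _ => ℤ).summable_iff.2 hf
  have hslab : ∀ m : ℕ, ((N : ℝ) + 2) ^ (-(N + 1 : ℝ)) * (1 / m) ≤
      ∑' j : Fin N → ℤ, f (Fin.cons (m : ℤ) j) := fun m =>
    (le_sum_jpw_rpow_slab N m).trans <| (hf'.prod_factor (m : ℤ)).sum_le_tsum _
      fun j _ => (Real.rpow_pos_of_pos (jpw_pos _) _).le
  have hharmonic : Summable fun m : ℕ => ((N : ℝ) + 2) ^ (-(N + 1 : ℝ)) * (1 / m) :=
    (hf'.prod.comp_injective Nat.cast_injective).of_nonneg_of_le (fun m => by positivity) hslab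
  exact Real.not_summable_one_div_natCast ((summable_mul_left_iff (by positivity)).1 hharmonic)

lemma summable_jpw_rpow_iff (hn : 0 < n) {r : ℝ} :
    (Summable fun k : Fin n → ℤ => jpw k ^ r) ↔ r < -n := by
  refine ⟨fun h => ?_, summable_jpw_rpow hn⟩
  by_contra! hr
  obtain ⟨N, rfl⟩ := Nat.exists_eq_succ_of_ne_zero hn.ne'
  refine not_summable_jpw_rpow_neg_succ N (h.of_nonneg_of_le
    (fun k => (Real.rpow_pos_of_pos (jpw_pos k) _).le) fun k =>
      Real.rpow_le_rpow_of_exponent_le (one_le_jpw k) ?_)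
  push_cast at hr
  linarith

lemma bddAbove_range_jpw_rpow_iff (hn : 0 < n) {r : ℝ} :
    BddAbove (Set.range fun k : Fin n → ℤ => jpw k ^ r) ↔ r ≤ 0 := by
  refine ⟨fun ⟨B, hB⟩ => ?_, fun hr =>
    ⟨1, Set.forall_mem_range.2 fun k => Real.rpow_le_one_of_one_le_of_nonpos (one_le_jpw k) hr⟩⟩
  by_contra! hr
  obtain ⟨m, hm⟩ := ((tendsto_rpow_atTop hr).comp
    tendsto_natCast_atTop_atTop).eventually_gt_atTop B |>.exists
  have hjpw : (m : ℝ) ≤ jpw fun _ : Fin n => (m : ℤ) := by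
    simpa using abs_le_jpw (fun _ : Fin n => (m : ℤ)) ⟨0, hn⟩
  exact hm.not_ge <| (Real.rpow_le_rpow m.cast_nonneg hjpw hr.le).trans
    (hB (Set.mem_range_self _))

end JapaneseBracket

section WeightedSequenceSpace

variable {n : ℕ}

lemma lqsNorm_eq_eLpNorm {q : ℝ≥0∞} (hq : q ≠ 0) (s : ℝ) (a : (Fin n → ℤ) → ℂ) :
    lqsNorm q s a = eLpNorm (fun k => jpw k ^ s • a k) q count := by
  have hnorm : ∀ k, ‖jpw k ^ s • a k‖ₑ = ‖a k‖₊ * ENNReal.ofReal (jpw k ^ s) := fun k => by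
    rw [enorm_smul, Real.enorm_of_nonneg (Real.rpow_pos_of_pos (jpw_pos k) s).le, mul_comm,
      enorm_eq_nnnorm]
  rw [lqsNorm]
  split_ifs with hq'
  · rw [hq', eLpNorm_exponent_top, eLpNormEssSup_count]
    simp_rw [hnorm]
  · rw [eLpNorm_eq_lintegral_rpow_enorm_toReal hq hq', lintegral_count]
    simp_rw [hnorm]

lemma jpw_rpow_smul_rpow_smul (k : Fin n → ℤ) (r r' : ℝ) (x : ℂ) :
    jpw k ^ r • jpw k ^ r' • x = jpw k ^ (r + r') • x := by
  rw [smul_smul, Real.rpow_add (jpw_pos k)]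

lemma exists_lqsNorm_le_iff_isBoundedMultiplier {q₁ q₂ : ℝ≥0∞} (hq₁ : q₁ ≠ 0) (hq₂ : q₂ ≠ 0)
    (s₁ s₂ : ℝ) :
    (∃ C : ℝ≥0, ∀ a : (Fin n → ℤ) → ℂ, lqsNorm q₂ s₂ a ≤ C * lqsNorm q₁ s₁ a) ↔
      IsBoundedMultiplier ℂ q₁ q₂ fun k : Fin n → ℤ => jpw k ^ (s₂ - s₁) := by
  simp_rw [lqsNorm_eq_eLpNorm hq₁, lqsNorm_eq_eLpNorm hq₂]
  refine exists_congr fun C => ⟨fun h u => ?_, fun h a => ?_⟩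
  · have h₂ : (fun k => jpw k ^ s₂ • jpw k ^ (-s₁) • u k) =
        (fun k : Fin n → ℤ => jpw k ^ (s₂ - s₁)) • u := by
      ext k
      rw [jpw_rpow_smul_rpow_smul, ← sub_eq_add_neg]
      rfl
    have h₁ : (fun k => jpw k ^ s₁ • jpw k ^ (-s₁) • u k) = u := by
      ext k
      rw [jpw_rpow_smul_rpow_smul, add_neg_cancel, Real.rpow_zero, one_smul]
    simpa only [h₁, h₂] using h fun k => jpw k ^ (-s₁) • u k
  · have h₂ : (fun k : Fin n → ℤ => jpw k ^ (s₂ - s₁)) • (fun k => jpw k ^ s₁ • a k) =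
        fun k => jpw k ^ s₂ • a k := by
      ext k
      exact (jpw_rpow_smul_rpow_smul k _ _ _).trans (by rw [sub_add_cancel])
    simpa only [h₂] using h fun k => jpw k ^ s₁ • a k

end WeightedSequenceSpace

/-- The embedding `l^{q₁}_{s₁}(ℤⁿ) ⊆ l^{q₂}_{s₂}(ℤⁿ)` holds iff
`1/q₂ ≤ 1/q₁ ∧ s₂ ≤ s₁`, or `1/q₂ > 1/q₁ ∧ 1/q₂ + s₂/n < 1/q₁ + s₁/n`. -/
theorem stmt0 (n : ℕ) (hn : 0 < n) (q₁ q₂ : ℝ≥0∞) (hq₁ : 0 < q₁) (hq₂ : 0 < q₂)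
    (s₁ s₂ : ℝ) :
    (∃ C : ℝ≥0, ∀ a : (Fin n → ℤ) → ℂ, lqsNorm q₂ s₂ a ≤ C * lqsNorm q₁ s₁ a) ↔
      ((rcp q₂ ≤ rcp q₁ ∧ s₂ ≤ s₁) ∨
        (rcp q₁ < rcp q₂ ∧ rcp q₂ + s₂ / n < rcp q₁ + s₁ / n)) := by
  have hn' : (0 : ℝ) < n := by exact_mod_cast hn
  have habs : ∀ (r : ℝ) (k : Fin n → ℤ), |jpw k ^ r| = jpw k ^ r :=
    fun r k => abs_of_pos (Real.rpow_pos_of_pos (jpw_pos k) r)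
  have hdiv : ∀ x y : ℝ, x + y / n = (n * x + y) / n := fun x y => by field_simp
  rw [exists_lqsNorm_le_iff_isBoundedMultiplier hq₁.ne' hq₂.ne', rcp, rcp, hdiv, hdiv,
    div_lt_div_iff_of_pos_right hn']
  rcases le_or_gt q₁ q₂ with hq | hq
  · have hr := ENNReal.toReal_mono (ENNReal.inv_ne_top.2 hq₁.ne') (ENNReal.inv_le_inv.2 hq)
    rw [isBoundedMultiplier_iff_bddAbove hq₁.ne' hq]
    simp_rw [habs]
    rw [bddAbove_range_jpw_rpow_iff hn]
    constructor
    · exact fun h => Or.inl ⟨hr, by linarith⟩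
    · rintro (⟨-, h⟩ | ⟨h, -⟩) <;> linarith
  · have hr := ENNReal.toReal_strict_mono (ENNReal.inv_ne_top.2 hq₂.ne') (ENNReal.inv_lt_inv.2 hq)
    rw [isBoundedMultiplier_iff_summable hq₂.ne' hq]
    simp_rw [habs, ← Real.rpow_mul (jpw_pos _).le]
    rw [summable_jpw_rpow_iff hn, ← div_eq_mul_inv, div_lt_iff₀ (sub_pos.2 hr)]
    constructor
    · exact fun h => Or.inr ⟨hr, by nlinarith⟩
    · rintro (⟨h, -⟩ | ⟨-, h⟩) <;> nlinarith
end

section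
/- Suppose 0 < q, q₁, q₂ ≤ ∞ and let S = {j ∈ {1,2} : q_j ≥ 1}. The discrete Young convolution inequality l^{q₁}(ℤⁿ) * l^{q₂}(ℤⁿ) ⊆ l^{q}(ℤⁿ), i.e. ‖a * b‖_{l^q} ≤ C‖a‖_{l^{q₁}}‖b‖_{l^{q₂}}, holds if and only if (|S| − 1) + 1/q ≤ 1/q₁ + 1/q₂ and 1/q ≤ 1/q₁ and 1/q ≤ 1/q₂. -/
/-!
Write `r = 1/q`, `s = 1/q₁`, `t = 1/q₂` and measure sequences by `rcpNorm`, the `l^{1/r}`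
quasi-norm. Since `‖·‖_{l^p}` decreases in `p`, sufficiency reduces to an extremal exponent:
for `s, t ≤ 1` this is Young's inequality with `r = s + t - 1`, obtained from the three-factor
Hölder inequality; if `s ≤ 1 < t` one lowers `t` to `1` (and symmetrically); if `s, t > 1`,
the inequality `(∑ xᵢ)^p ≤ ∑ xᵢ^p` for `p ≤ 1` gives `‖a * b‖_p ≤ ‖a‖_p ‖b‖_p` at
`p = 1 / min s t`. For necessity, convolving the indicator of a cube of side `N` with a
Dirac mass gives `r ≤ s` and `r ≤ t`, while the convolution of the indicators of cubes of
sides `2N` and `N` is at least `Nⁿ` on a cube of side `N`, which as `N → ∞` forces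
`1 + r ≤ s + t`.
-/

open scoped ENNReal NNReal

/-- The (unweighted) sequence norm `‖a‖_{l^q}` for a nonnegative sequence on `ℤⁿ`,
with the supremum modification when `q = ∞`. -/
noncomputable def lqNorm {n : ℕ} (q : ℝ≥0∞) (a : (Fin n → ℤ) → ℝ≥0∞) : ℝ≥0∞ :=
  if q = ∞ then ⨆ k, a k
  else (∑' k, (a k) ^ q.toReal) ^ (1 / q.toReal)

/-- Convolution of nonnegative sequences on `ℤⁿ`: `(a*b)(k) = ∑_j a(j) b(k−j)`. -/
noncomputable def seqConv {n : ℕ} (a b : (Fin n → ℤ) → ℝ≥0∞) : (Fin n → ℤ) → ℝ≥0∞ :=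
  fun k => ∑' j, a j * b (k - j)

section Sequences

variable {ι κ : Type*} {r s t : ℝ}

lemma rpow_tsum_le_tsum_rpow (f : ι → ℝ≥0∞) {p : ℝ} (hp0 : 0 < p) (hp1 : p ≤ 1) :
    (∑' i, f i) ^ p ≤ ∑' i, f i ^ p := by
  have finset_le : ∀ s : Finset ι, (∑ i ∈ s, f i) ^ p ≤ ∑ i ∈ s, f i ^ p := by
    classical
    intro s
    induction s using Finset.induction with
    | empty => simp [ENNReal.zero_rpow_of_pos hp0]
    | insert i s hi ih =>
      rw [Finset.sum_insert hi, Finset.sum_insert hi]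
      exact (ENNReal.rpow_add_le_add_rpow _ _ hp0.le hp1).trans (add_le_add_right ih _)
  have rpow_iSup : (⨆ s : Finset ι, ∑ i ∈ s, f i) ^ p = ⨆ s : Finset ι, (∑ i ∈ s, f i) ^ p :=
    (ENNReal.orderIsoRpow p hp0).map_iSup _
  rw [ENNReal.tsum_eq_iSup_sum, rpow_iSup]
  exact iSup_le fun s => (finset_le s).trans (ENNReal.sum_le_tsum s)

open MeasureTheory in
lemma tsum_prod_rpow_le (s : Finset κ) (f : κ → ι → ℝ≥0∞) {p : κ → ℝ}
    (hp : ∑ i ∈ s, p i = 1) (hp0 : ∀ i ∈ s, 0 ≤ p i) :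
    ∑' x, ∏ i ∈ s, f i x ^ p i ≤ ∏ i ∈ s, (∑' x, f i x) ^ p i := by
  let _ : MeasurableSpace ι := ⊤
  have : MeasurableSingletonClass ι := ⟨fun _ => trivial⟩
  simpa only [lintegral_count] using
    ENNReal.lintegral_prod_norm_pow_le (μ := Measure.count (α := ι)) s
      (fun i _ => measurable_from_top.aemeasurable) hp hp0

lemma tsum_rpow_mul_rpow_le (f g : ι → ℝ≥0∞) {p q : ℝ} (hp : 0 ≤ p) (hq : 0 ≤ q)
    (hpq : p + q = 1) :
    ∑' x, f x ^ p * g x ^ q ≤ (∑' x, f x) ^ p * (∑' x, g x) ^ q := by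
  simpa [Fin.prod_univ_two] using
    tsum_prod_rpow_le Finset.univ ![f, g] (p := ![p, q]) (by simpa using hpq)
      (by simp [Fin.forall_fin_two, hp, hq])

lemma tsum_rpow_mul_rpow_mul_rpow_le (f g h : ι → ℝ≥0∞) {p q r : ℝ} (hp : 0 ≤ p) (hq : 0 ≤ q)
    (hr : 0 ≤ r) (hpqr : p + q + r = 1) :
    ∑' x, f x ^ p * g x ^ q * h x ^ r ≤
      (∑' x, f x) ^ p * (∑' x, g x) ^ q * (∑' x, h x) ^ r := by
  simpa [Fin.prod_univ_three, mul_assoc] using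
    tsum_prod_rpow_le Finset.univ ![f, g, h] (p := ![p, q, r])
      (by simpa [Fin.sum_univ_three, add_assoc] using hpqr)
      (by simp [Fin.forall_fin_succ, hp, hq, hr])

/-- The `l^{1/r}` quasi-norm, `r = 0` giving the sup norm. Indexing by the reciprocal
exponent makes Young's condition linear in `(r, s, t)`. -/
noncomputable def rcpNorm (r : ℝ) (a : ι → ℝ≥0∞) : ℝ≥0∞ :=
  if r = 0 then ⨆ i, a i else (∑' i, a i ^ r⁻¹) ^ r

lemma rcpNorm_zero (a : ι → ℝ≥0∞) : rcpNorm 0 a = ⨆ i, a i := if_pos rfl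

lemma rcpNorm_of_ne_zero (hr : r ≠ 0) (a : ι → ℝ≥0∞) :
    rcpNorm r a = (∑' i, a i ^ r⁻¹) ^ r := if_neg hr

lemma rcpNorm_one (a : ι → ℝ≥0∞) : rcpNorm 1 a = ∑' i, a i := by
  simp [rcpNorm_of_ne_zero one_ne_zero]

lemma rcpNorm_mono (hr : 0 ≤ r) {a b : ι → ℝ≥0∞} (h : a ≤ b) : rcpNorm r a ≤ rcpNorm r b := by
  rcases hr.eq_or_lt with rfl | hr
  · simpa only [rcpNorm_zero] using iSup_mono h
  · simp only [rcpNorm_of_ne_zero hr.ne']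
    gcongr with i
    exact h i

lemma rcpNorm_comp_equiv (e : κ ≃ ι) (a : ι → ℝ≥0∞) : rcpNorm r (a ∘ e) = rcpNorm r a := by
  by_cases hr : r = 0
  · simp only [hr, rcpNorm_zero, Function.comp_apply, e.iSup_comp (g := a)]
  · simp only [rcpNorm_of_ne_zero hr, Function.comp_apply, e.tsum_eq (fun i => a i ^ r⁻¹)]

lemma rcpNorm_indicator (hr : 0 ≤ r) {S : Finset ι} (hS : S.Nonempty) (c : ℝ≥0∞) :
    rcpNorm r ((S : Set ι).indicator fun _ => c) = c * (S.card : ℝ≥0∞) ^ r := by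
  rcases hr.eq_or_lt with rfl | hr
  · obtain ⟨i, hi⟩ := hS
    refine (rcpNorm_zero _).trans (le_antisymm ?_ ?_)
    · simpa using iSup_le fun j => Set.indicator_le_self' (fun _ _ => zero_le) j
    · simpa using le_iSup_of_le i (Set.indicator_of_mem (Finset.mem_coe.2 hi) (fun _ => c)).ge
  · have hpow : ∀ i, (S : Set ι).indicator (fun _ => c) i ^ r⁻¹ =
        (S : Set ι).indicator (fun _ => c ^ r⁻¹) i := fun i => by
      by_cases hi : i ∈ (S : Set ι) <;> simp [hi, ENNReal.zero_rpow_of_pos (inv_pos.2 hr)]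
    rw [rcpNorm_of_ne_zero hr.ne', tsum_congr hpow, ← sum_eq_tsum_indicator, Finset.sum_const,
      nsmul_eq_mul, ENNReal.mul_rpow_of_nonneg _ _ hr.le, ENNReal.rpow_inv_rpow hr.ne', mul_comm]

lemma rcpNorm_le_rcpNorm_of_le (hr : 0 ≤ r) (hrs : r ≤ s) (a : ι → ℝ≥0∞) :
    rcpNorm r a ≤ rcpNorm s a := by
  rcases hrs.eq_or_lt with rfl | hrs
  · rfl
  have hs := hr.trans_lt hrs
  rw [rcpNorm_of_ne_zero hs.ne']
  rcases hr.eq_or_lt with rfl | hr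
  · refine (rcpNorm_zero a).trans_le (iSup_le fun i => ?_)
    calc a i = (a i ^ s⁻¹) ^ s := (ENNReal.rpow_inv_rpow hs.ne' _).symm
      _ ≤ (∑' j, a j ^ s⁻¹) ^ s := by gcongr; exact ENNReal.le_tsum i
  · have hrs' : r / s ≤ 1 := (div_le_one hs).2 hrs.le
    calc rcpNorm r a = ((∑' i, a i ^ r⁻¹) ^ (r / s)) ^ s := by
          rw [rcpNorm_of_ne_zero hr.ne', ← ENNReal.rpow_mul, div_mul_cancel₀ _ hs.ne']
      _ ≤ (∑' i, (a i ^ r⁻¹) ^ (r / s)) ^ s := by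
          gcongr; exact rpow_tsum_le_tsum_rpow _ (by positivity) hrs'
      _ = (∑' i, a i ^ s⁻¹) ^ s := by
          congr 1; refine tsum_congr fun i => ?_
          rw [← ENNReal.rpow_mul]; congr 1; field_simp

lemma tsum_mul_le_iSup_mul_tsum (a b : ι → ℝ≥0∞) : ∑' i, a i * b i ≤ (⨆ i, a i) * ∑' i, b i := by
  rw [← ENNReal.tsum_mul_left]
  exact ENNReal.tsum_le_tsum fun i => mul_le_mul_left (le_iSup a i) _

lemma tsum_mul_le_rcpNorm_mul_rcpNorm (hs : 0 ≤ s) (ht : 0 ≤ t) (hst : s + t = 1)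
    (a b : ι → ℝ≥0∞) : ∑' i, a i * b i ≤ rcpNorm s a * rcpNorm t b := by
  rcases hs.eq_or_lt with rfl | hs
  · rw [zero_add] at hst
    rw [hst, rcpNorm_zero, rcpNorm_one]
    exact tsum_mul_le_iSup_mul_tsum a b
  rcases ht.eq_or_lt with rfl | ht
  · rw [add_zero] at hst
    rw [hst, rcpNorm_zero, rcpNorm_one, mul_comm]
    simpa only [mul_comm] using tsum_mul_le_iSup_mul_tsum b a
  rw [rcpNorm_of_ne_zero hs.ne', rcpNorm_of_ne_zero ht.ne']
  calc ∑' i, a i * b i = ∑' i, (a i ^ s⁻¹) ^ s * (b i ^ t⁻¹) ^ t := by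
        simp only [ENNReal.rpow_inv_rpow hs.ne', ENNReal.rpow_inv_rpow ht.ne']
    _ ≤ _ := tsum_rpow_mul_rpow_le _ _ hs.le ht.le hst

end Sequences

section Convolution

variable {n : ℕ} {r s t : ℝ}

lemma seqConv_comm (a b : (Fin n → ℤ) → ℝ≥0∞) : seqConv a b = seqConv b a := by
  ext k
  rw [seqConv, ← (Equiv.subLeft k).tsum_eq]
  simp [seqConv, mul_comm]

lemma tsum_seqConv (a b : (Fin n → ℤ) → ℝ≥0∞) :
    ∑' k, seqConv a b k = (∑' j, a j) * ∑' j, b j := by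
  simp only [seqConv]
  rw [ENNReal.tsum_comm, ← ENNReal.tsum_mul_right]
  refine tsum_congr fun j => ?_
  rw [ENNReal.tsum_mul_left]
  exact congrArg _ ((Equiv.subRight j).tsum_eq b)

lemma seqConv_le_rcpNorm_mul_rcpNorm (hs : 0 ≤ s) (ht : 0 ≤ t) (hst : s + t = 1)
    (a b : (Fin n → ℤ) → ℝ≥0∞) (k : Fin n → ℤ) :
    seqConv a b k ≤ rcpNorm s a * rcpNorm t b :=
  calc seqConv a b k = ∑' j, a j * (b ∘ Equiv.subLeft k) j := rfl
    _ ≤ rcpNorm s a * rcpNorm t (b ∘ Equiv.subLeft k) :=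
        tsum_mul_le_rcpNorm_mul_rcpNorm hs ht hst _ _
    _ = rcpNorm s a * rcpNorm t b := by rw [rcpNorm_comp_equiv]

lemma rcpNorm_seqConv_le_of_one_le (hr : 1 ≤ r) (a b : (Fin n → ℤ) → ℝ≥0∞) :
    rcpNorm r (seqConv a b) ≤ rcpNorm r a * rcpNorm r b := by
  have hr0 : 0 < r := one_pos.trans_le hr
  have pointwise : ∀ k, seqConv a b k ^ r⁻¹ ≤
      seqConv (fun j => a j ^ r⁻¹) (fun j => b j ^ r⁻¹) k := fun k => by
    refine (rpow_tsum_le_tsum_rpow _ (inv_pos.2 hr0) (inv_le_one_of_one_le₀ hr)).trans_eq ?_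
    simp only [seqConv, ENNReal.mul_rpow_of_nonneg _ _ (inv_nonneg.2 hr0.le)]
  simp only [rcpNorm_of_ne_zero hr0.ne']
  calc (∑' k, seqConv a b k ^ r⁻¹) ^ r
      ≤ (∑' k, seqConv (fun j => a j ^ r⁻¹) (fun j => b j ^ r⁻¹) k) ^ r := by
        gcongr with k; exact pointwise k
    _ = _ := by rw [tsum_seqConv, ENNReal.mul_rpow_of_nonneg _ _ hr0.le]

lemma seqConv_rpow_le (hs : s ≤ 1) (ht : t ≤ 1) (hst : 1 ≤ s + t)
    (a b : (Fin n → ℤ) → ℝ≥0∞) (k : Fin n → ℤ) :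
    seqConv (fun j => a j ^ s) (fun j => b j ^ t) k ≤
      seqConv a b k ^ (s + t - 1) * (∑' j, a j) ^ (1 - t) * (∑' j, b j) ^ (1 - s) := by
  have hr : 0 ≤ s + t - 1 := by linarith
  have split : ∀ x y : ℝ≥0∞,
      x ^ s * y ^ t = (x * y) ^ (s + t - 1) * x ^ (1 - t) * y ^ (1 - s) := fun x y =>
    calc x ^ s * y ^ t = x ^ (s + t - 1 + (1 - t)) * y ^ (s + t - 1 + (1 - s)) := by ring_nf
      _ = _ := by
        rw [ENNReal.rpow_add_of_nonneg _ _ hr (by linarith),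
          ENNReal.rpow_add_of_nonneg _ _ hr (by linarith), ENNReal.mul_rpow_of_nonneg _ _ hr]
        ring
  calc seqConv (fun j => a j ^ s) (fun j => b j ^ t) k
      = ∑' j, (a j * b (k - j)) ^ (s + t - 1) * a j ^ (1 - t) * b (k - j) ^ (1 - s) :=
        tsum_congr fun j => split _ _
    _ ≤ (∑' j, a j * b (k - j)) ^ (s + t - 1) * (∑' j, a j) ^ (1 - t)
          * (∑' j, b (k - j)) ^ (1 - s) :=
        tsum_rpow_mul_rpow_mul_rpow_le _ _ _ hr (by linarith) (by linarith) (by ring)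
    _ = _ := by rw [← (Equiv.subLeft k).tsum_eq b]; rfl

end Convolution

section Sufficiency

variable {n : ℕ} {r s t : ℝ}

lemma rcpNorm_seqConv_le_young (hs0 : 0 ≤ s) (hs1 : s ≤ 1) (ht0 : 0 ≤ t) (ht1 : t ≤ 1)
    (hst : 1 ≤ s + t) (a b : (Fin n → ℤ) → ℝ≥0∞) :
    rcpNorm (s + t - 1) (seqConv a b) ≤ rcpNorm s a * rcpNorm t b := by
  set r := s + t - 1
  rcases (show 0 ≤ r by linarith).eq_or_lt with hr | hr
  · rw [← hr, rcpNorm_zero]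
    exact iSup_le fun k => seqConv_le_rcpNorm_mul_rcpNorm hs0 ht0 (by linarith) a b k
  have hs : 0 < s := by linarith
  have ht : 0 < t := by linarith
  set a' := fun j => a j ^ s⁻¹
  set b' := fun j => b j ^ t⁻¹
  set A := ∑' j, a' j
  set B := ∑' j, b' j
  set X := A ^ (1 - t) * B ^ (1 - s)
  have pointwise : ∀ k, seqConv a b k ^ r⁻¹ ≤ seqConv a' b' k * X ^ r⁻¹ := fun k =>
    calc seqConv a b k ^ r⁻¹
        = seqConv (fun j => a' j ^ s) (fun j => b' j ^ t) k ^ r⁻¹ := by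
          simp only [a', b', ENNReal.rpow_inv_rpow hs.ne', ENNReal.rpow_inv_rpow ht.ne']
      _ ≤ (seqConv a' b' k ^ r * X) ^ r⁻¹ := by
          rw [← mul_assoc]; gcongr; exact seqConv_rpow_le hs1 ht1 hst a' b' k
      _ = seqConv a' b' k * X ^ r⁻¹ := by
          rw [ENNReal.mul_rpow_of_nonneg _ _ (inv_nonneg.2 hr.le), ENNReal.rpow_rpow_inv hr.ne']
  calc rcpNorm r (seqConv a b) = (∑' k, seqConv a b k ^ r⁻¹) ^ r := rcpNorm_of_ne_zero hr.ne' _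
    _ ≤ (∑' k, seqConv a' b' k * X ^ r⁻¹) ^ r := by gcongr with k; exact pointwise k
    _ = A ^ r * A ^ (1 - t) * (B ^ r * B ^ (1 - s)) := by
        rw [ENNReal.tsum_mul_right, tsum_seqConv, ENNReal.mul_rpow_of_nonneg _ _ hr.le,
          ENNReal.rpow_inv_rpow hr.ne', ENNReal.mul_rpow_of_nonneg _ _ hr.le]
        ring
    _ = rcpNorm s a * rcpNorm t b := by
        rw [← ENNReal.rpow_add_of_nonneg _ _ hr.le (by linarith),
          ← ENNReal.rpow_add_of_nonneg _ _ hr.le (by linarith),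
          rcpNorm_of_ne_zero hs.ne', rcpNorm_of_ne_zero ht.ne']
        congr 2 <;> ring

lemma rcpNorm_seqConv_le (hr : 0 ≤ r) (hs : 0 ≤ s) (ht : 0 ≤ t)
    (h : (if s ≤ 1 then (1 : ℝ) else 0) + (if t ≤ 1 then (1 : ℝ) else 0) - 1 + r ≤ s + t)
    (hrs : r ≤ s) (hrt : r ≤ t) (a b : (Fin n → ℤ) → ℝ≥0∞) :
    rcpNorm r (seqConv a b) ≤ rcpNorm s a * rcpNorm t b := by
  have reduce : ∀ {r' s' t' : ℝ}, r ≤ r' → 0 ≤ s' → s' ≤ s → 0 ≤ t' → t' ≤ t →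
      rcpNorm r' (seqConv a b) ≤ rcpNorm s' a * rcpNorm t' b →
      rcpNorm r (seqConv a b) ≤ rcpNorm s a * rcpNorm t b :=
    fun hrr' hs' hss' ht' htt' h' => (rcpNorm_le_rcpNorm_of_le hr hrr' _).trans <| h'.trans <|
      mul_le_mul' (rcpNorm_le_rcpNorm_of_le hs' hss' a) (rcpNorm_le_rcpNorm_of_le ht' htt' b)
  by_cases hs1 : s ≤ 1 <;> by_cases ht1 : t ≤ 1 <;> simp only [hs1, ht1, if_true, if_false] at h
  · exact reduce (by linarith) hs le_rfl ht le_rfl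
      (rcpNorm_seqConv_le_young hs hs1 ht ht1 (by linarith) a b)
  · exact reduce (by linarith) hs le_rfl zero_le_one (by linarith)
      (rcpNorm_seqConv_le_young hs hs1 zero_le_one le_rfl (by linarith) a b)
  · exact reduce (by linarith) zero_le_one (by linarith) ht le_rfl
      (rcpNorm_seqConv_le_young zero_le_one le_rfl ht ht1 (by linarith) a b)
  · have hmin : 1 ≤ min s t := le_min (by linarith) (by linarith)
    exact reduce (le_min hrs hrt) (by linarith) (min_le_left s t) (by linarith)
      (min_le_right s t) (rcpNorm_seqConv_le_of_one_le hmin a b)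

end Sufficiency

section Cubes

variable {n : ℕ} {r s t : ℝ}

noncomputable def cube (n : ℕ) (m : ℤ) (N : ℕ) : Finset (Fin n → ℤ) :=
  Fintype.piFinset fun _ => Finset.Ico m (m + N)

lemma card_cube (m : ℤ) (N : ℕ) : (cube n m N).card = N ^ n := by
  simp [cube, Fintype.card_piFinset]

lemma cube_nonempty (m : ℤ) {N : ℕ} (hN : 1 ≤ N) : (cube n m N).Nonempty :=
  ⟨fun _ => m, by simp only [cube, Fintype.mem_piFinset, Finset.mem_Ico]; omega⟩

lemma cube_zero_one : cube n 0 1 = {0} := by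
  ext x
  simp only [cube, Fintype.mem_piFinset, Finset.mem_Ico, Finset.mem_singleton, funext_iff]
  exact forall_congr' fun i => by simp only [Nat.cast_one, zero_add, Pi.zero_apply]; omega

noncomputable def cubeIndicator (n : ℕ) (m : ℤ) (N : ℕ) (c : ℝ≥0∞) : (Fin n → ℤ) → ℝ≥0∞ :=
  (cube n m N : Set (Fin n → ℤ)).indicator fun _ => c

lemma rcpNorm_cubeIndicator (hr : 0 ≤ r) (m : ℤ) {N : ℕ} (hN : 1 ≤ N) (c : ℝ≥0∞) :
    rcpNorm r (cubeIndicator n m N c) = c * (N : ℝ≥0∞) ^ (n * r) := by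
  rw [cubeIndicator, rcpNorm_indicator hr (cube_nonempty m hN), card_cube, Nat.cast_pow,
    ← ENNReal.rpow_natCast, ← ENNReal.rpow_mul]

lemma seqConv_cubeIndicator_zero_one (a : (Fin n → ℤ) → ℝ≥0∞) :
    seqConv a (cubeIndicator n 0 1 1) = a := by
  ext k
  rw [seqConv, tsum_eq_single k fun j hj => ?_]
  · simp [cubeIndicator, cube_zero_one]
  · simp [cubeIndicator, cube_zero_one, sub_eq_zero, Ne.symm hj]

lemma pow_le_seqConv_cubeIndicator {N : ℕ} {k : Fin n → ℤ} (hk : k ∈ cube n (N - 1) N) :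
    (N : ℝ≥0∞) ^ n ≤ seqConv (cubeIndicator n 0 (2 * N) 1) (cubeIndicator n 0 N 1) k := by
  have hsub : ∀ j ∈ cube n 0 N, k - j ∈ cube n 0 (2 * N) := by
    simp only [cube, Fintype.mem_piFinset, Finset.mem_Ico, Pi.sub_apply] at hk ⊢
    intro j hj i
    have := hk i
    have := hj i
    push_cast
    omega
  rw [seqConv_comm]
  calc (N : ℝ≥0∞) ^ n = ∑ j ∈ cube n 0 N, (1 : ℝ≥0∞) := by simp [card_cube]
    _ = ∑ j ∈ cube n 0 N, cubeIndicator n 0 N 1 j * cubeIndicator n 0 (2 * N) 1 (k - j) :=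
        Finset.sum_congr rfl fun j hj => by simp [cubeIndicator, hj, hsub j hj]
    _ ≤ _ := ENNReal.sum_le_tsum _

end Cubes

open Filter in
lemma le_of_forall_natCast_rpow_le {x y : ℝ} {C : ℝ≥0∞} (hC : C ≠ ∞)
    (h : ∀ N : ℕ, 1 ≤ N → (N : ℝ≥0∞) ^ x ≤ C * (N : ℝ≥0∞) ^ y) : x ≤ y := by
  by_contra! hxy
  have hgrow : Tendsto (fun N : ℕ => (N : ℝ) ^ (x - y)) atTop atTop :=
    (tendsto_rpow_atTop (sub_pos.2 hxy)).comp tendsto_natCast_atTop_atTop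
  obtain ⟨N, hN, hCN⟩ := ((eventually_ge_atTop 1).and (hgrow.eventually_gt_atTop C.toReal)).exists
  have hN0 : (N : ℝ≥0∞) ≠ 0 := by exact_mod_cast (by omega : N ≠ 0)
  have hNtop : (N : ℝ≥0∞) ≠ ∞ := ENNReal.natCast_ne_top N
  have hle : (N : ℝ≥0∞) ^ (x - y) ≤ C := by
    rw [← ENNReal.mul_le_mul_iff_left (ENNReal.rpow_pos (pos_iff_ne_zero.2 hN0) hNtop).ne'
      (ENNReal.rpow_ne_top_of_ne_zero hN0 hNtop), ← ENNReal.rpow_add _ _ hN0 hNtop, sub_add_cancel]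
    exact h N hN
  have := ENNReal.toReal_mono hC hle
  rw [← ENNReal.toReal_rpow, ENNReal.toReal_natCast] at this
  linarith

def YoungBound (n : ℕ) (r s t : ℝ) : Prop :=
  ∃ C : ℝ≥0, ∀ a b : (Fin n → ℤ) → ℝ≥0∞,
    rcpNorm r (seqConv a b) ≤ C * rcpNorm s a * rcpNorm t b

namespace YoungBound

variable {n : ℕ} {r s t : ℝ}

lemma symm (h : YoungBound n r s t) : YoungBound n r t s := by
  obtain ⟨C, hC⟩ := h
  exact ⟨C, fun a b => by simpa only [seqConv_comm b a, mul_right_comm] using hC b a⟩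

lemma le_left (hn : 0 < n) (hr : 0 ≤ r) (hs : 0 ≤ s) (ht : 0 ≤ t) (h : YoungBound n r s t) :
    r ≤ s := by
  obtain ⟨C, hC⟩ := h
  have key : (n : ℝ) * r ≤ n * s := le_of_forall_natCast_rpow_le ENNReal.coe_ne_top fun N hN => by
    simpa [seqConv_cubeIndicator_zero_one, rcpNorm_cubeIndicator hr 0 hN,
      rcpNorm_cubeIndicator hs 0 hN, rcpNorm_cubeIndicator ht 0 le_rfl] using
      hC (cubeIndicator n 0 N 1) (cubeIndicator n 0 1 1)
  exact le_of_mul_le_mul_left key (by exact_mod_cast hn)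

lemma le_right (hn : 0 < n) (hr : 0 ≤ r) (hs : 0 ≤ s) (ht : 0 ≤ t) (h : YoungBound n r s t) :
    r ≤ t :=
  h.symm.le_left hn hr ht hs

lemma one_add_le (hn : 0 < n) (hr : 0 ≤ r) (hs : 0 ≤ s) (ht : 0 ≤ t) (h : YoungBound n r s t) :
    1 + r ≤ s + t := by
  obtain ⟨C, hC⟩ := h
  have key : (n : ℝ) * (1 + r) ≤ n * (s + t) :=
    le_of_forall_natCast_rpow_le (C := C * 2 ^ (n * s)) (by finiteness) fun N hN => by
      have hN0 : (N : ℝ≥0∞) ≠ 0 := by exact_mod_cast (by omega : N ≠ 0)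
      have hNtop : (N : ℝ≥0∞) ≠ ∞ := ENNReal.natCast_ne_top N
      calc (N : ℝ≥0∞) ^ ((n : ℝ) * (1 + r))
          = (N : ℝ≥0∞) ^ n * (N : ℝ≥0∞) ^ ((n : ℝ) * r) := by
            rw [mul_add, mul_one, ENNReal.rpow_add _ _ hN0 hNtop, ENNReal.rpow_natCast]
        _ = rcpNorm r (cubeIndicator n (N - 1) N ((N : ℝ≥0∞) ^ n)) :=
            (rcpNorm_cubeIndicator hr _ hN _).symm
        _ ≤ rcpNorm r (seqConv (cubeIndicator n 0 (2 * N) 1) (cubeIndicator n 0 N 1)) :=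
            rcpNorm_mono hr (Set.indicator_le fun k hk => pow_le_seqConv_cubeIndicator hk)
        _ ≤ C * rcpNorm s (cubeIndicator n 0 (2 * N) 1) * rcpNorm t (cubeIndicator n 0 N 1) :=
            hC _ _
        _ = C * 2 ^ ((n : ℝ) * s) * (N : ℝ≥0∞) ^ ((n : ℝ) * (s + t)) := by
            rw [rcpNorm_cubeIndicator hs 0 (by omega), rcpNorm_cubeIndicator ht 0 hN,
              Nat.cast_mul, Nat.cast_ofNat, ENNReal.mul_rpow_of_nonneg _ _ (by positivity),
              mul_add, ENNReal.rpow_add _ _ hN0 hNtop]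
            ring
  exact le_of_mul_le_mul_left key (by exact_mod_cast hn)

end YoungBound

lemma youngBound_iff {n : ℕ} (hn : 0 < n) {r s t : ℝ} (hr : 0 ≤ r) (hs : 0 ≤ s) (ht : 0 ≤ t) :
    YoungBound n r s t ↔
      (if s ≤ 1 then (1 : ℝ) else 0) + (if t ≤ 1 then (1 : ℝ) else 0) - 1 + r ≤ s + t ∧
        r ≤ s ∧ r ≤ t := by
  refine ⟨fun h => ⟨?_, h.le_left hn hr hs ht, h.le_right hn hr hs ht⟩,
    fun ⟨h, hrs, hrt⟩ => ⟨1, fun a b => ?_⟩⟩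
  · have := h.one_add_le hn hr hs ht
    split_ifs <;> linarith
  · simpa using rcpNorm_seqConv_le hr hs ht h hrs hrt a b

lemma rcp_nonneg (q : ℝ≥0∞) : 0 ≤ rcp q := ENNReal.toReal_nonneg

lemma rcp_le_one_iff {q : ℝ≥0∞} (hq : 0 < q) : rcp q ≤ 1 ↔ 1 ≤ q := by
  rw [rcp, ← ENNReal.inv_le_one, ← ENNReal.toReal_le_toReal (ENNReal.inv_ne_top.2 hq.ne')
    ENNReal.one_ne_top, ENNReal.toReal_one]

lemma lqNorm_eq_rcpNorm {n : ℕ} {q : ℝ≥0∞} (hq : 0 < q) (a : (Fin n → ℤ) → ℝ≥0∞) :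
    lqNorm q a = rcpNorm (rcp q) a := by
  rcases eq_or_ne q ∞ with rfl | hq'
  · simp [lqNorm, rcp, rcpNorm_zero]
  · have hq0 : 0 < q.toReal := ENNReal.toReal_pos hq.ne' hq'
    rw [lqNorm, if_neg hq', rcp, ENNReal.toReal_inv, rcpNorm_of_ne_zero (inv_ne_zero hq0.ne'),
      inv_inv, one_div]

/-- Sharp discrete Young inequality: `l^{q₁} * l^{q₂} ⊆ l^q` holds iff
`(|S|−1) + 1/q ≤ 1/q₁ + 1/q₂`, `1/q ≤ 1/q₁` and `1/q ≤ 1/q₂`,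
where `S = {j ∈ {1,2} : q_j ≥ 1}`. -/
theorem stmt2 (n : ℕ) (hn : 0 < n) (q q₁ q₂ : ℝ≥0∞)
    (hq : 0 < q) (hq₁ : 0 < q₁) (hq₂ : 0 < q₂) :
    (∃ C : ℝ≥0, ∀ a b : (Fin n → ℤ) → ℝ≥0∞,
        lqNorm q (seqConv a b) ≤ C * lqNorm q₁ a * lqNorm q₂ b) ↔
      ((((if 1 ≤ q₁ then (1 : ℝ) else 0) + (if 1 ≤ q₂ then (1 : ℝ) else 0)) - 1)
          + rcp q ≤ rcp q₁ + rcp q₂ ∧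
        rcp q ≤ rcp q₁ ∧ rcp q ≤ rcp q₂) := by
  simp only [lqNorm_eq_rcpNorm hq, lqNorm_eq_rcpNorm hq₁, lqNorm_eq_rcpNorm hq₂,
    ← rcp_le_one_iff hq₁, ← rcp_le_one_iff hq₂]
  exact youngBound_iff hn (rcp_nonneg q) (rcp_nonneg q₁) (rcp_nonneg q₂)
end

section
/- Let β ∈ (1, 2] and let μ : ℝⁿ \ {0} → ℝ be a C² function, positively homogeneous of degree β (μ(λξ) = λ^β μ(ξ) for λ > 0), with μ(ξ) > 0 for all ξ ≠ 0. Then there exists ξ₀ ∈ ℝⁿ with |ξ₀| = 1 such that the Hessian matrix Hess μ(ξ₀) is positive definite; in particular det Hess μ(ξ₀) ≠ 0. -/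
open Matrix

/-- The partial derivative `∂_j μ (y)`. -/
noncomputable def pd1 {n : ℕ} (μ : (Fin n → ℝ) → ℝ) (j : Fin n) (y : Fin n → ℝ) : ℝ :=
  fderiv ℝ μ y (Pi.single j 1)

/-- The second partial derivative `∂_i ∂_j μ (y)`. -/
noncomputable def pd2 {n : ℕ} (μ : (Fin n → ℝ) → ℝ) (i j : Fin n) (y : Fin n → ℝ) : ℝ :=
  fderiv ℝ (pd1 μ j) y (Pi.single i 1)

/-!
Let `ξ₀` minimise `μ` on the unit sphere and put `m = μ ξ₀ > 0`. By homogeneity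
`μ ξ ≥ m |ξ|^β` for every `ξ ≠ 0`, with equality at `ξ₀`, so `μ - m |·|^β` has a local minimum
at `ξ₀` and `Hess μ(ξ₀) ⪰ m Hess |·|^β (ξ₀) = m (β I + β (β - 2) ξ₀ ξ₀ᵀ)`. By Cauchy–Schwarz the
last matrix is positive definite as soon as `β > 1`. The second-order condition is checked along
the lines `t ↦ ξ₀ + t x`, where `|ξ₀ + t x|² = 1 + 2 ⟨ξ₀, x⟩ t + |x|² t²`.
-/

open Filter Topology

theorem IsLocalMin.deriv_deriv_nonneg {f : ℝ → ℝ} {a : ℝ} (h : IsLocalMin f a)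
    (hc : ContinuousAt f a) : 0 ≤ deriv (deriv f) a := by
  by_contra! hneg
  -- By the second-derivative test `a` is also a local maximum, so `f` is locally constant.
  have hmax := isLocalMax_of_deriv_deriv_neg hneg h.deriv_eq_zero hc
  have hconst : f =ᶠ[𝓝 a] fun _ => f a :=
    (h.and hmax).mono fun x hx => le_antisymm hx.2 hx.1
  have hderiv : deriv f =ᶠ[𝓝 a] fun _ => 0 :=
    hconst.eventuallyEq_nhds.mono fun x hx => by rw [hx.deriv_eq, deriv_const]
  simp [hderiv.deriv_eq] at hneg

theorem IsLocalMin.nonneg_of_hasDerivAt_of_hasDerivAt {f f' : ℝ → ℝ} {a c : ℝ}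
    (h : IsLocalMin f a) (hf : ∀ᶠ t in 𝓝 a, HasDerivAt f (f' t) t) (hf' : HasDerivAt f' c a) :
    0 ≤ c := by
  have hderiv : deriv f =ᶠ[𝓝 a] f' := hf.mono fun t ht => ht.deriv
  simpa [hderiv.deriv_eq, hf'.deriv] using
    h.deriv_deriv_nonneg hf.self_of_nhds.differentiableAt.continuousAt

theorem hasDerivAt_quadratic (a b t : ℝ) :
    HasDerivAt (fun s => 1 + 2 * a * s + b * s ^ 2) (2 * a + 2 * b * t) t :=
  ((((hasDerivAt_id' t).const_mul (2 * a)).const_add 1).fun_add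
    ((hasDerivAt_pow 2 t).const_mul b)).congr_deriv (by ring)

theorem eventually_hasDerivAt_rpow_quadratic (p a b : ℝ) :
    ∀ᶠ t in 𝓝 (0 : ℝ), HasDerivAt (fun s => (1 + 2 * a * s + b * s ^ 2) ^ p)
      (p * (1 + 2 * a * t + b * t ^ 2) ^ (p - 1) * (2 * a + 2 * b * t)) t := by
  have hq : ∀ᶠ t in 𝓝 (0 : ℝ), 0 < 1 + 2 * a * t + b * t ^ 2 :=
    (show Continuous fun t : ℝ => 1 + 2 * a * t + b * t ^ 2 by fun_prop).continuousAt.eventually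
      (lt_mem_nhds (by simp))
  filter_upwards [hq] with t ht
  exact (hasDerivAt_quadratic a b t).rpow_const (Or.inl ht.ne') |>.congr_deriv (by ring)

theorem hasDerivAt_deriv_rpow_quadratic (p a b : ℝ) :
    HasDerivAt (fun t => p * (1 + 2 * a * t + b * t ^ 2) ^ (p - 1) * (2 * a + 2 * b * t))
      (p * (p - 1) * (2 * a) ^ 2 + 2 * p * b) 0 := by
  have hl : HasDerivAt (fun s => 2 * a + 2 * b * s) (2 * b) 0 :=
    (((hasDerivAt_id' 0).const_mul (2 * b)).const_add (2 * a)).congr_deriv (by ring)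
  refine ((((hasDerivAt_quadratic a b 0).rpow_const (p := p - 1) (by simp)).const_mul p).fun_mul
    hl).congr_deriv ?_
  norm_num
  ring

section

variable {E F : Type*} [NormedAddCommGroup E] [NormedSpace ℝ E] [NormedAddCommGroup F]
  [NormedSpace ℝ F]

theorem HasFDerivAt.hasDerivAt_comp_add_smul {f : E → F} {f' : E →L[ℝ] F} {y x : E} {t : ℝ}
    (hf : HasFDerivAt f f' (y + t • x)) :
    HasDerivAt (fun s : ℝ => f (y + s • x)) (f' x) t :=
  hf.comp_hasDerivAt t (((hasDerivAt_id t).smul_const x).const_add y |>.congr_deriv (one_smul _ _))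

theorem hasFDerivAt_fderiv_apply {f : E → F} {y : E} (hf : DifferentiableAt ℝ (fderiv ℝ f) y)
    (v : E) : HasFDerivAt (fun z => fderiv ℝ f z v) ((fderiv ℝ (fderiv ℝ f) y).flip v) y := by
  simpa using hf.hasFDerivAt.clm_apply (hasFDerivAt_const v y)

end

theorem pd2_eq_fderiv_fderiv {n : ℕ} {μ : (Fin n → ℝ) → ℝ} {y : Fin n → ℝ}
    (hμ : DifferentiableAt ℝ (fderiv ℝ μ) y) (i j : Fin n) :
    pd2 μ i j y = fderiv ℝ (fderiv ℝ μ) y (Pi.single i 1) (Pi.single j 1) := by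
  rw [pd2, show pd1 μ j = fun z => fderiv ℝ μ z (Pi.single j 1) from rfl,
    (hasFDerivAt_fderiv_apply hμ _).fderiv]
  rfl

section

variable {ι : Type*} [Fintype ι]

theorem dotProduct_mulVec_of_apply_single [DecidableEq ι] (B : (ι → ℝ) →L[ℝ] (ι → ℝ) →L[ℝ] ℝ)
    (x y : ι → ℝ) : x ⬝ᵥ (of fun i j => B (Pi.single i 1) (Pi.single j 1)) *ᵥ y = B x y := by
  have h : (of fun i j => B (Pi.single i 1) (Pi.single j 1)) =
      LinearMap.toMatrix₂' ℝ B.toLinearMap₁₂ := rfl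
  rw [h, ← Matrix.toLinearMap₂'_apply', Matrix.toLinearMap₂'_toMatrix']
  rfl

theorem det_ne_zero_of_dotProduct_mulVec_pos [DecidableEq ι] {A : Matrix ι ι ℝ}
    (hA : ∀ x ≠ 0, 0 < x ⬝ᵥ A *ᵥ x) : A.det ≠ 0 := by
  intro hdet
  obtain ⟨x, hx, hAx⟩ := Matrix.exists_mulVec_eq_zero_iff.2 hdet
  simpa [hAx] using hA x hx

theorem sum_sq_add_smul (y x : ι → ℝ) (t : ℝ) :
    ∑ i, (y + t • x) i ^ 2 =
      ∑ i, y i ^ 2 + 2 * (∑ i, y i * x i) * t + (∑ i, x i ^ 2) * t ^ 2 := by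
  simp only [Pi.add_apply, Pi.smul_apply, smul_eq_mul, Finset.mul_sum, Finset.sum_mul,
    ← Finset.sum_add_distrib]
  exact Finset.sum_congr rfl fun i _ => by ring

theorem sum_sq_pos_of_ne_zero {ξ : ι → ℝ} (hξ : ξ ≠ 0) : 0 < ∑ i, ξ i ^ 2 := by
  obtain ⟨i, hi⟩ := Function.ne_iff.1 hξ
  exact lt_of_lt_of_le (pow_two_pos_of_ne_zero hi)
    (Finset.single_le_sum (fun j _ => sq_nonneg (ξ j)) (Finset.mem_univ i))

theorem ne_zero_of_sum_sq_eq_one {ξ : ι → ℝ} (hξ : ∑ i, ξ i ^ 2 = 1) : ξ ≠ 0 := by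
  rintro rfl
  simp at hξ

theorem isCompact_setOf_sum_sq_eq_one : IsCompact {ξ : ι → ℝ | ∑ i, ξ i ^ 2 = 1} := by
  refine (isCompact_univ_pi fun _ => isCompact_Icc (a := -1) (b := 1)).of_isClosed_subset
    (isClosed_eq (by fun_prop) continuous_const) fun ξ hξ i _ => ?_
  rw [Set.mem_Icc, ← abs_le, ← sq_le_one_iff_abs_le_one]
  exact (Finset.single_le_sum (fun j _ => sq_nonneg (ξ j)) (Finset.mem_univ i)).trans_eq hξ

theorem mul_rpow_le_of_isMinOn {μ : (ι → ℝ) → ℝ} {β : ℝ}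
    (hhom : ∀ l : ℝ, 0 < l → ∀ ξ : ι → ℝ, ξ ≠ 0 → μ (l • ξ) = l ^ β * μ ξ) {ξ₀ : ι → ℝ}
    (hmin : IsMinOn μ {ξ | ∑ i, ξ i ^ 2 = 1} ξ₀) {ξ : ι → ℝ} (hξ : ξ ≠ 0) :
    μ ξ₀ * (∑ i, ξ i ^ 2) ^ (β / 2) ≤ μ ξ := by
  set s := ∑ i, ξ i ^ 2
  have hs : 0 < s := sum_sq_pos_of_ne_zero hξ
  set l := √s
  have hl : 0 < l := Real.sqrt_pos.2 hs
  have hu : ∑ i, (l⁻¹ • ξ) i ^ 2 = 1 := by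
    simp only [Pi.smul_apply, smul_eq_mul, mul_pow, ← Finset.mul_sum, inv_pow,
      Real.sq_sqrt hs.le, l]
    exact inv_mul_cancel₀ hs.ne'
  have hlβ : l ^ β = s ^ (β / 2) := by
    rw [show l = s ^ (1 / 2 : ℝ) from Real.sqrt_eq_rpow s, ← Real.rpow_mul hs.le]
    ring_nf
  calc μ ξ₀ * s ^ (β / 2) ≤ μ (l⁻¹ • ξ) * l ^ β := by
        rw [hlβ]
        exact mul_le_mul_of_nonneg_right (hmin hu) (by positivity)
    _ = μ ξ := by
        rw [mul_comm, ← hhom l hl _ (ne_zero_of_sum_sq_eq_one hu), smul_inv_smul₀ hl.ne']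

theorem mul_le_fderiv_fderiv_apply_self {μ : (ι → ℝ) → ℝ} {β : ℝ} {ξ₀ : ι → ℝ}
    (hξ₀ : ∑ i, ξ₀ i ^ 2 = 1) (hμ : ContDiffAt ℝ 2 μ ξ₀)
    (hle : ∀ᶠ ξ in 𝓝 ξ₀, μ ξ₀ * (∑ i, ξ i ^ 2) ^ (β / 2) ≤ μ ξ) (x : ι → ℝ) :
    μ ξ₀ * (β * ∑ i, x i ^ 2 + β * (β - 2) * (∑ i, ξ₀ i * x i) ^ 2) ≤
      fderiv ℝ (fderiv ℝ μ) ξ₀ x x := by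
  set a := ∑ i, ξ₀ i * x i
  set b := ∑ i, x i ^ 2
  have hq : ∀ t : ℝ, ∑ i, (ξ₀ + t • x) i ^ 2 = 1 + 2 * a * t + b * t ^ 2 := fun t => by
    rw [sum_sq_add_smul, hξ₀]
  have hline : Tendsto (fun t : ℝ => ξ₀ + t • x) (𝓝 0) (𝓝 ξ₀) :=
    (show Continuous fun t : ℝ => ξ₀ + t • x by fun_prop).tendsto' 0 ξ₀ (by simp)
  have hdiff : ∀ᶠ t in 𝓝 (0 : ℝ), DifferentiableAt ℝ μ (ξ₀ + t • x) :=
    hline.eventually ((hμ.eventually (by simp)).mono fun ξ hξ => hξ.differentiableAt two_ne_zero)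
  have hD2 : DifferentiableAt ℝ (fderiv ℝ μ) ξ₀ :=
    (hμ.fderiv_right (m := 1) (by norm_num)).differentiableAt one_ne_zero
  have hmin : IsLocalMin (fun t => μ (ξ₀ + t • x) - μ ξ₀ * (1 + 2 * a * t + b * t ^ 2) ^ (β / 2))
      0 := by
    filter_upwards [hline.eventually hle] with t ht
    rw [hq] at ht
    simpa using sub_nonneg.2 ht
  have hsecond := hmin.nonneg_of_hasDerivAt_of_hasDerivAt
    ((hdiff.and (eventually_hasDerivAt_rpow_quadratic (β / 2) a b)).mono fun t ht =>
      ht.1.hasFDerivAt.hasDerivAt_comp_add_smul.sub (ht.2.const_mul (μ ξ₀)))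
    ((HasFDerivAt.hasDerivAt_comp_add_smul (f := fun z => fderiv ℝ μ z x) (y := ξ₀) (t := 0)
      (by simpa using hasFDerivAt_fderiv_apply hD2 x)).sub
      ((hasDerivAt_deriv_rpow_quadratic (β / 2) a b).const_mul (μ ξ₀)))
  simp only [ContinuousLinearMap.flip_apply] at hsecond
  linarith [show β * b + β * (β - 2) * a ^ 2 =
    β / 2 * (β / 2 - 1) * (2 * a) ^ 2 + 2 * (β / 2) * b by ring]

end

theorem rpow_hessian_form_pos {β a b : ℝ} (hβ : 1 < β) (hab : a ^ 2 ≤ b) (hb : 0 < b) :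
    0 < β * b + β * (β - 2) * a ^ 2 := by
  rcases le_total β 2 with hβ2 | hβ2
  · nlinarith [mul_le_mul_of_nonpos_left hab (by nlinarith : β * (β - 2) ≤ 0),
      mul_pos (mul_pos (by linarith : 0 < β) (by linarith : 0 < β - 1)) hb]
  · nlinarith [mul_nonneg (by nlinarith : 0 ≤ β * (β - 2)) (sq_nonneg a)]

theorem stmt12_general (n : ℕ) (hn : 0 < n) (β : ℝ) (hβ1 : 1 < β)
    (μ : (Fin n → ℝ) → ℝ) (hμ : ContDiffOn ℝ 2 μ {0}ᶜ)
    (hhom : ∀ l : ℝ, 0 < l → ∀ ξ : Fin n → ℝ, ξ ≠ 0 → μ (l • ξ) = l ^ β * μ ξ)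
    (hpos : ∀ ξ : Fin n → ℝ, ξ ≠ 0 → 0 < μ ξ) :
    ∃ ξ₀ : Fin n → ℝ, (∑ i, ξ₀ i ^ 2) = 1 ∧
      (∀ x : Fin n → ℝ, x ≠ 0 →
        0 < x ⬝ᵥ ((Matrix.of fun i j => pd2 μ i j ξ₀).mulVec x)) ∧
      (Matrix.of fun i j => pd2 μ i j ξ₀).det ≠ 0 := by
  obtain ⟨ξ₀, hξ₀, hmin⟩ := isCompact_setOf_sum_sq_eq_one.exists_isMinOn
    ⟨Pi.single ⟨0, hn⟩ 1, by simp [Pi.single_apply]⟩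
    (hμ.continuousOn.mono fun _ => ne_zero_of_sum_sq_eq_one)
  have hξ₀0 := ne_zero_of_sum_sq_eq_one hξ₀
  have hμξ₀ : ContDiffAt ℝ 2 μ ξ₀ := hμ.contDiffAt (isOpen_compl_singleton.mem_nhds hξ₀0)
  have hle : ∀ᶠ ξ in 𝓝 ξ₀, μ ξ₀ * (∑ i, ξ i ^ 2) ^ (β / 2) ≤ μ ξ :=
    eventually_of_mem (isOpen_compl_singleton.mem_nhds hξ₀0) fun _ =>
      mul_rpow_le_of_isMinOn hhom hmin
  have hquad : ∀ x : Fin n → ℝ, x ≠ 0 →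
      0 < x ⬝ᵥ ((Matrix.of fun i j => pd2 μ i j ξ₀).mulVec x) := by
    intro x hx
    simp only [pd2_eq_fderiv_fderiv ((hμξ₀.fderiv_right (m := 1) (by norm_num)).differentiableAt
      one_ne_zero), dotProduct_mulVec_of_apply_single]
    refine (mul_pos (hpos ξ₀ hξ₀0) ?_).trans_le (mul_le_fderiv_fderiv_apply_self hξ₀ hμξ₀ hle x)
    have hab := Finset.sum_mul_sq_le_sq_mul_sq Finset.univ ξ₀ x
    rw [hξ₀, one_mul] at hab
    exact rpow_hessian_form_pos hβ1 hab (sum_sq_pos_of_ne_zero hx)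
  exact ⟨ξ₀, hξ₀, hquad, det_ne_zero_of_dotProduct_mulVec_pos hquad⟩

/-- If `β ∈ (1,2]` and `μ` is C² on `ℝⁿ \ {0}`, positively homogeneous of degree `β`,
and positive away from the origin, then there is `ξ₀` with `|ξ₀| = 1` such that
`Hess μ(ξ₀)` is positive definite; in particular `det Hess μ(ξ₀) ≠ 0`. -/
theorem stmt12 (n : ℕ) (hn : 0 < n) (β : ℝ) (hβ1 : 1 < β) (hβ2 : β ≤ 2)
    (μ : (Fin n → ℝ) → ℝ) (hμ : ContDiffOn ℝ 2 μ {0}ᶜ)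
    (hhom : ∀ l : ℝ, 0 < l → ∀ ξ : Fin n → ℝ, ξ ≠ 0 → μ (l • ξ) = l ^ β * μ ξ)
    (hpos : ∀ ξ : Fin n → ℝ, ξ ≠ 0 → 0 < μ ξ) :
    ∃ ξ₀ : Fin n → ℝ, (∑ i, ξ₀ i ^ 2) = 1 ∧
      (∀ x : Fin n → ℝ, x ≠ 0 →
        0 < x ⬝ᵥ ((Matrix.of fun i j => pd2 μ i j ξ₀).mulVec x)) ∧
      (Matrix.of fun i j => pd2 μ i j ξ₀).det ≠ 0 :=
  stmt12_general n hn β hβ1 μ hμ hhom hpos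
end

section
/- Let α ∈ [0, 1). There exists δ > 0 such that the family of balls {B(⟨k⟩^{α/(1−α)} k, δ ⟨k⟩^{α/(1−α)})}_{k ∈ ℤⁿ} is pairwise disjoint. -/
/-- `k ∈ ℤⁿ` viewed as a point of Euclidean space. -/
noncomputable def ipt {n : ℕ} (k : Fin n → ℤ) : EuclideanSpace ℝ (Fin n) :=
  WithLp.toLp 2 (fun i => (k i : ℝ))

/-!
Put `β = α / (1 - α) ≥ 0` and `w x = ⟨x⟩ ^ β`. For distinct lattice points `u, v` with
`‖u‖ ≤ ‖v‖` we have `‖v - u‖ ≥ 1`, and it suffices to bound `w u + w v` by `(1 + 4 ^ β)` times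
the distance of the centers. Since `w` is radially nondecreasing,
`⟪w v • v - w u • u, v - u⟫ ≥ w u * ‖v - u‖ ^ 2`, so the centers are at distance at least `w u`;
this suffices when `⟨v⟩ ≤ 4 ⟨u⟩`, because then `w v ≤ 4 ^ β * w u`. Otherwise
`‖v‖ - ‖u‖ ≥ ⟨v⟩ - 1 - ⟨u⟩ ≥ 1`, and the reverse triangle inequality gives distance at least
`w v ≥ (w u + w v) / 2`.
-/

section JapaneseBracket

variable {E : Type*} [NormedAddCommGroup E]

noncomputable def japaneseBracket (x : E) : ℝ :=
  √(1 + ‖x‖ ^ 2)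

theorem one_le_japaneseBracket (x : E) : 1 ≤ japaneseBracket x :=
  Real.one_le_sqrt.mpr (by nlinarith [sq_nonneg ‖x‖])

theorem norm_le_japaneseBracket (x : E) : ‖x‖ ≤ japaneseBracket x :=
  Real.le_sqrt_of_sq_le (by linarith)

theorem japaneseBracket_le_one_add_norm (x : E) : japaneseBracket x ≤ 1 + ‖x‖ :=
  Real.sqrt_le_iff.mpr ⟨by positivity, by nlinarith [norm_nonneg x]⟩

theorem japaneseBracket_le_japaneseBracket {x y : E} (h : ‖x‖ ≤ ‖y‖) :
    japaneseBracket x ≤ japaneseBracket y :=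
  Real.sqrt_le_sqrt (by nlinarith [norm_nonneg x])

theorem mul_norm_sub_le_norm_smul_sub_smul [InnerProductSpace ℝ E] {u v : E} {a b : ℝ}
    (hab : a ≤ b) (huv : ‖u‖ ≤ ‖v‖) : a * ‖v - u‖ ≤ ‖b • v - a • u‖ := by
  have hvu : 0 ≤ inner ℝ v (v - u) := by
    rw [inner_sub_right, real_inner_self_eq_norm_sq]
    nlinarith [real_inner_le_norm v u, norm_nonneg v]
  have hdecomp : b • v - a • u = a • (v - u) + (b - a) • v := by
    simp only [smul_sub, sub_smul]; abel
  have hinner : a * ‖v - u‖ ^ 2 ≤ inner ℝ (b • v - a • u) (v - u) := by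
    rw [hdecomp, inner_add_left, real_inner_smul_left, real_inner_smul_left,
      real_inner_self_eq_norm_sq]
    nlinarith [mul_nonneg (sub_nonneg.mpr hab) hvu]
  rcases (norm_nonneg (v - u)).eq_or_lt with h0 | hpos
  · rw [← h0, mul_zero]; exact norm_nonneg _
  · have := hinner.trans (real_inner_le_norm _ _)
    nlinarith

theorem rpow_japaneseBracket_add_le [InnerProductSpace ℝ E] {β : ℝ} (hβ : 0 ≤ β) {u v : E}
    (huv : 1 ≤ ‖v - u‖) :
    japaneseBracket u ^ β + japaneseBracket v ^ β ≤
      (1 + 4 ^ β) * dist (japaneseBracket u ^ β • u) (japaneseBracket v ^ β • v) := by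
  wlog hle : ‖u‖ ≤ ‖v‖ generalizing u v
  · rw [add_comm, dist_comm]
    exact this (by rwa [norm_sub_rev]) (le_of_not_ge hle)
  set p := japaneseBracket u
  set q := japaneseBracket v
  have hp : 1 ≤ p := one_le_japaneseBracket u
  have hpq : p ≤ q := japaneseBracket_le_japaneseBracket hle
  have hpβ : 1 ≤ p ^ β := Real.one_le_rpow hp hβ
  have hpqβ : p ^ β ≤ q ^ β := Real.rpow_le_rpow (by linarith) hpq hβ
  have h4β : 1 ≤ (4 : ℝ) ^ β := Real.one_le_rpow (by norm_num) hβ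
  rw [dist_comm, dist_eq_norm]
  rcases le_or_gt q (4 * p) with hnear | hfar
  · have hqβ : q ^ β ≤ 4 ^ β * p ^ β := by
      rw [← Real.mul_rpow (by norm_num) (by linarith)]
      exact Real.rpow_le_rpow (by linarith) hnear hβ
    have := mul_norm_sub_le_norm_smul_sub_smul hpqβ hle
    nlinarith
  · have hgap : 1 ≤ ‖v‖ - ‖u‖ := by
      linarith [norm_le_japaneseBracket u, japaneseBracket_le_one_add_norm v]
    have : q ^ β ≤ ‖q ^ β • v - p ^ β • u‖ := by
      calc q ^ β ≤ q ^ β * ‖v‖ - q ^ β * ‖u‖ := by nlinarith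
        _ ≤ q ^ β * ‖v‖ - p ^ β * ‖u‖ := by gcongr
        _ ≤ ‖q ^ β • v - p ^ β • u‖ := by
          have := norm_sub_norm_le (q ^ β • v) (p ^ β • u)
          rwa [norm_smul, norm_smul, Real.norm_of_nonneg (by linarith),
            Real.norm_of_nonneg (by linarith)] at this
    nlinarith

end JapaneseBracket

theorem jpw_eq_japaneseBracket {n : ℕ} (k : Fin n → ℤ) : jpw k = japaneseBracket (ipt k) := by
  rw [jpw, japaneseBracket, ← Real.sqrt_eq_rpow, EuclideanSpace.norm_eq,
    Real.sq_sqrt (by positivity)]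
  simp [ipt]

theorem one_le_norm_ipt_sub {n : ℕ} {k l : Fin n → ℤ} (h : k ≠ l) : 1 ≤ ‖ipt k - ipt l‖ := by
  obtain ⟨i, hi⟩ := Function.ne_iff.mp h
  calc (1 : ℝ) ≤ |(k i : ℝ) - l i| := by exact_mod_cast Int.one_le_abs (sub_ne_zero.mpr hi)
    _ = ‖(ipt k - ipt l) i‖ := by simp [ipt, Real.norm_eq_abs]
    _ ≤ ‖ipt k - ipt l‖ := PiLp.norm_apply_le _ i

/-- For `α ∈ [0,1)` there is `δ > 0` such that the balls
`B(⟨k⟩^{α/(1−α)} k, δ⟨k⟩^{α/(1−α)})`, `k ∈ ℤⁿ`, are pairwise disjoint. -/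
theorem stmt19 (n : ℕ) (α : ℝ) (hα0 : 0 ≤ α) (hα1 : α < 1) :
    ∃ δ > (0 : ℝ), Pairwise fun k l : Fin n → ℤ =>
      Disjoint
        (Metric.ball ((jpw k ^ (α / (1 - α))) • ipt k) (δ * jpw k ^ (α / (1 - α))))
        (Metric.ball ((jpw l ^ (α / (1 - α))) • ipt l) (δ * jpw l ^ (α / (1 - α)))) := by
  set β := α / (1 - α)
  have hβ : 0 ≤ β := div_nonneg hα0 (by linarith)
  have hC : 0 < 1 + (4 : ℝ) ^ β := by positivity
  refine ⟨(1 + 4 ^ β)⁻¹, inv_pos.mpr hC, fun k l hkl => Metric.ball_disjoint_ball ?_⟩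
  rw [← mul_add, inv_mul_le_iff₀ hC]
  simp only [jpw_eq_japaneseBracket]
  exact rpow_japaneseBracket_add_le hβ (one_le_norm_ipt_sub hkl.symm)
end
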